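/- arXiv:0712.2094 — 5 statements merged into one kernel-verified Lean document; each statement's English description precedes it below -/
import Mathlib

section
/- Cevian area splitting (Eppstein's equalization step): let A, B, C ∈ ℝ² be affinely independent and T = convexHull ℝ {A, B, C}. For every real number t with 0 ≤ t ≤ (MeasureTheory.volume T).toReal there exists a point P on the closed segment [B, C] such that (MeasureTheory.volume (convexHull ℝ {A, B, P})).toReal = t. -/
/-!
The affine map fixing `A` and `B` and sending `C` to `P = lineMap B C s` has a linear part of
determinant `s`, so it multiplies areas by `|s|` and maps triangle `ABC` onto triangle `ABP`.
Hence `area (ABP) = s * area (ABC)` for `0 ≤ s ≤ 1`, and `s = t / area (ABC)` does the job.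
-/

noncomputable section

open MeasureTheory

/-- The Euclidean plane. -/
abbrev Plane : Type := EuclideanSpace ℝ (Fin 2)

open Module AffineMap Pointwise

theorem LinearMap.det_basis_constr_lineMap {R M : Type*} [CommRing R] [AddCommGroup M]
    [Module R M] (b : Basis (Fin 2) R M) (s : R) :
    LinearMap.det (b.constr R ![b 0, lineMap (b 0) (b 1) s]) = s := by
  rw [← LinearMap.det_toMatrix b]
  have hM : LinearMap.toMatrix b b (b.constr R ![b 0, lineMap (b 0) (b 1) s]) =
      !![1, 1 - s; 0, s] := by
    ext i j
    fin_cases i <;> fin_cases j <;> simp [LinearMap.toMatrix_apply, lineMap_apply_module]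
  rw [hM, Matrix.det_fin_two_of]
  ring

theorem AffineIndependent.linearIndependent_sub_fin_three {k V : Type*} [Ring k]
    [AddCommGroup V] [Module k V] {A B C : V} (h : AffineIndependent k ![A, B, C]) :
    LinearIndependent k ![B - A, C - A] := by
  have hvsub := (affineIndependent_iff_linearIndependent_vsub k _ 0).mp h
  convert hvsub.comp (fun i : Fin 2 => ⟨i.succ, i.succ_ne_zero⟩)
    fun i j hij => Fin.succ_injective _ (congrArg Subtype.val hij) using 1
  ext j
  fin_cases j <;> rfl

theorem AffineIndependent.exists_affineMap_eq_lineMap_det_eq {k V : Type*} [Field k]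
    [AddCommGroup V] [Module k V] {A B C : V} (h : AffineIndependent k ![A, B, C]) (hV : finrank k V = 2) (s : k) :
    ∃ f : V →ᵃ[k] V,
      f A = A ∧ f B = B ∧ f C = lineMap B C s ∧ LinearMap.det f.linear = s := by
  have hcard : Fintype.card (Fin 2) = finrank k V := by simp [hV]
  let b : Basis (Fin 2) k V :=
    basisOfLinearIndependentOfCardEqFinrank h.linearIndependent_sub_fin_three hcard
  have hb : ⇑b = ![B - A, C - A] := coe_basisOfLinearIndependentOfCardEqFinrank _ hcard
  let L := b.constr k ![b 0, lineMap (b 0) (b 1) s]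
  have hL (i : Fin 2) : L (b i) = ![b 0, lineMap (b 0) (b 1) s] i := b.constr_basis k _ i
  refine ⟨AffineMap.mk' (fun x => L (x - A) + A) L A fun x => by simp, by simp, ?_, ?_,
    LinearMap.det_basis_constr_lineMap b s⟩
  · show L (B - A) + A = B
    simpa [hb] using congrArg (· + A) (hL 0)
  · show L (C - A) + A = lineMap B C s
    have hC : C - A = b 1 := by simp [hb]
    rw [hC, hL 1]
    simp only [hb, Matrix.cons_val_one, Matrix.cons_val_zero, lineMap_apply_module]
    module

section

variable {E : Type*} [NormedAddCommGroup E] [NormedSpace ℝ E] [MeasurableSpace E] [BorelSpace E]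
  [FiniteDimensional ℝ E] (μ : Measure E) [μ.IsAddHaarMeasure]

theorem MeasureTheory.Measure.addHaar_image_affineMap (f : E →ᵃ[ℝ] E) (s : Set E) :
    μ (f '' s) = ENNReal.ofReal |LinearMap.det f.linear| * μ s := by
  have hf : f '' s = f 0 +ᵥ f.linear '' s := by
    rw [← Set.image_vadd, Set.image_image]
    refine Set.image_congr fun x _ => ?_
    rw [vadd_eq_add, add_comm, ← vadd_eq_add, ← f.map_vadd, vadd_eq_add, add_zero]
  rw [hf, measure_vadd, Measure.addHaar_image_linearMap]

theorem MeasureTheory.Measure.addHaar_convexHull_lineMap (hE : finrank ℝ E = 2) {A B C : E}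
    (h : AffineIndependent ℝ ![A, B, C]) (s : ℝ) :
    μ (convexHull ℝ {A, B, lineMap B C s}) =
      ENNReal.ofReal |s| * μ (convexHull ℝ {A, B, C}) := by
  obtain ⟨f, hA, hB, hC, hdet⟩ := h.exists_affineMap_eq_lineMap_det_eq hE s
  have himage : convexHull ℝ {A, B, lineMap B C s} = f '' convexHull ℝ {A, B, C} := by
    rw [f.image_convexHull, Set.image_insert_eq, Set.image_insert_eq, Set.image_singleton,
      hA, hB, hC]
  rw [himage, addHaar_image_affineMap, hdet]

end

/-- Cevian area splitting: for each value `t` between `0` and the area of triangle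
`ABC`, there is a point `P` on segment `[B, C]` such that the triangle `ABP` has
area exactly `t`. -/
theorem cevian_area_splitting (A B C : Plane)
    (hABC : AffineIndependent ℝ ![A, B, C])
    (T : Set Plane) (hT : T = convexHull ℝ {A, B, C})
    (t : ℝ) (ht0 : 0 ≤ t) (ht1 : t ≤ (volume T).toReal) :
    ∃ P ∈ segment ℝ B C,
      (volume (convexHull ℝ {A, B, P})).toReal = t := by
  set V := (volume T).toReal
  have hV : 0 ≤ V := ENNReal.toReal_nonneg
  have hsV : t / V * V = t := div_mul_cancel_of_imp fun hV0 => le_antisymm (hV0 ▸ ht1) ht0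
  have hs0 : 0 ≤ t / V := div_nonneg ht0 hV
  refine ⟨lineMap B C (t / V), segment_eq_image_lineMap ℝ B C ▸
    ⟨t / V, ⟨hs0, div_le_one_of_le₀ ht1 hV⟩, rfl⟩, ?_⟩
  rw [volume.addHaar_convexHull_lineMap finrank_euclideanSpace_fin hABC, ← hT,
    ENNReal.toReal_mul, ENNReal.toReal_ofReal (abs_nonneg _), abs_of_nonneg hs0, hsV]
end
end

section
/- Incenter subdivision into obtuse triangles: let A, B, C ∈ ℝ² be affinely independent, let I be the incenter of triangle ABC, and let T = convexHull ℝ {A, B, C}. Then the three triangles T₁ = convexHull ℝ {A, I, B}, T₂ = convexHull ℝ {B, I, C}, T₃ = convexHull ℝ {C, I, A} have pairwise disjoint interiors, their union is T, and each of the angles ∠ A I B, ∠ B I C, ∠ C I A is strictly greater than π/2. -/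
/-!
Write the interior point `P` as `w_A A + w_B B + w_C C` with positive weights. A point `x` of the
triangle with barycentric coordinates `(α, β, γ)` lies in the subtriangle `A P B` when `γ / w_C` is
the least of the three ratios: removing `(γ / w_C) P` from `x` leaves a nonnegative combination of
`A` and `B`. The subtriangles `A P B` and `B P C` lie on the two sides of the line `P B`, the zero
set of the affine function `w_C α - w_A γ`, so their interiors are disjoint. For the incenter,
`⟪A - I, B - I⟫ = c (b - a - c) (b + c - a) / (2 (a + b + c))`, which is negative by the strict
triangle inequality, so the angle at `I` is obtuse.
-/

noncomputable section

open EuclideanGeometry Real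

/-- The incenter of triangle `ABC`: the barycentric combination with weights
proportional to the opposite side lengths. -/
def triIncenter (A B C : Plane) : Plane :=
  (dist B C / (dist B C + dist C A + dist A B)) • A +
  (dist C A / (dist B C + dist C A + dist A B)) • B +
  (dist A B / (dist B C + dist C A + dist A B)) • C

open scoped RealInnerProductSpace

section ConvexHullTriple

variable {E : Type*} [AddCommGroup E] [Module ℝ E] {A B C P x : E}

theorem mem_convexHull_triple_iff :
    x ∈ convexHull ℝ {A, B, C} ↔ ∃ α β γ : ℝ, 0 ≤ α ∧ 0 ≤ β ∧ 0 ≤ γ ∧ α + β + γ = 1 ∧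
      x = α • A + β • B + γ • C := by
  constructor
  · rw [← convexJoin_singleton_segment, mem_convexJoin]
    rintro ⟨_, rfl, y, ⟨u, v, hu, hv, huv, rfl⟩, s, t, hs, ht, hst, rfl⟩
    exact ⟨s, t * u, t * v, hs, mul_nonneg ht hu, mul_nonneg ht hv,
      by linear_combination t * huv + hst, by module⟩
  · rintro ⟨α, β, γ, hα, hβ, hγ, hsum, rfl⟩
    refine mem_convexHull_of_exists_fintype ![α, β, γ] ![A, B, C] ?_ ?_ ?_ ?_
    · simp [Fin.forall_fin_succ, hα, hβ, hγ]
    · simp [Fin.sum_univ_three, hsum]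
    · simp [Fin.forall_fin_succ]
    · simp [Fin.sum_univ_three, add_assoc]

theorem mem_convexHull_subtriangle {α β γ wa wb wc : ℝ} (hx : x = α • A + β • B + γ • C)
    (hP : P = wa • A + wb • B + wc • C) (hγ : 0 ≤ γ) (hwc : 0 < wc) (hsum : α + β + γ = 1)
    (hw : wa + wb + wc = 1) (hA : γ * wa ≤ α * wc) (hB : γ * wb ≤ β * wc) :
    x ∈ convexHull ℝ {A, P, B} := by
  obtain ⟨t, rfl⟩ : ∃ t, γ = t * wc := ⟨γ / wc, (div_mul_cancel₀ γ hwc.ne').symm⟩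
  refine mem_convexHull_triple_iff.2 ⟨α - t * wa, t, β - t * wb, ?_, ?_, ?_, ?_, ?_⟩
  · nlinarith
  · nlinarith
  · nlinarith
  · linear_combination hsum - t * hw
  · rw [hx, hP]
    module

-- One of `γ / wc`, `α / wa`, `β / wb` is the least of the three ratios.
theorem min_ratio_cases {α β γ wa wb wc : ℝ} (hwa : 0 < wa) (hwb : 0 < wb) (hwc : 0 < wc) :
    (γ * wa ≤ α * wc ∧ γ * wb ≤ β * wc) ∨ (α * wb ≤ β * wa ∧ α * wc ≤ γ * wa) ∨
      (β * wc ≤ γ * wb ∧ β * wa ≤ α * wb) := by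
  simp only [← div_le_div_iff₀ hwc hwa, ← div_le_div_iff₀ hwc hwb, ← div_le_div_iff₀ hwa hwb,
    ← div_le_div_iff₀ hwa hwc, ← div_le_div_iff₀ hwb hwc, ← div_le_div_iff₀ hwb hwa]
  rcases le_total (α / wa) (β / wb) with h₁ | h₁ <;>
    rcases le_total (β / wb) (γ / wc) with h₂ | h₂ <;>
    rcases le_total (γ / wc) (α / wa) with h₃ | h₃
  all_goals first
    | exact Or.inl ⟨by linarith, by linarith⟩
    | exact Or.inr (Or.inl ⟨by linarith, by linarith⟩)
    | exact Or.inr (Or.inr ⟨by linarith, by linarith⟩)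

theorem subtriangles_union_eq_convexHull {wa wb wc : ℝ} (hP : P = wa • A + wb • B + wc • C)
    (hwa : 0 < wa) (hwb : 0 < wb) (hwc : 0 < wc) (hw : wa + wb + wc = 1) :
    convexHull ℝ {A, P, B} ∪ convexHull ℝ {B, P, C} ∪ convexHull ℝ {C, P, A} =
      convexHull ℝ {A, B, C} := by
  have hPT : P ∈ convexHull ℝ {A, B, C} :=
    mem_convexHull_triple_iff.2 ⟨wa, wb, wc, hwa.le, hwb.le, hwc.le, hw, hP⟩
  have hsub {X Y : E} (hX : X ∈ ({A, B, C} : Set E)) (hY : Y ∈ ({A, B, C} : Set E)) :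
      convexHull ℝ {X, P, Y} ⊆ convexHull ℝ {A, B, C} :=
    convexHull_min (Set.insert_subset (subset_convexHull ℝ _ hX) <|
      Set.insert_subset hPT <| Set.singleton_subset_iff.2 (subset_convexHull ℝ _ hY))
      (convex_convexHull ℝ _)
  refine Set.Subset.antisymm (Set.union_subset (Set.union_subset (hsub (by simp) (by simp))
    (hsub (by simp) (by simp))) (hsub (by simp) (by simp))) ?_
  intro x hx
  obtain ⟨α, β, γ, hα, hβ, hγ, hsum, hx⟩ := mem_convexHull_triple_iff.1 hx
  rcases min_ratio_cases (α := α) (β := β) (γ := γ) hwa hwb hwc with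
    ⟨hA, hB⟩ | ⟨hB, hC⟩ | ⟨hC, hA⟩
  · exact Or.inl <| Or.inl <| mem_convexHull_subtriangle hx hP hγ hwc hsum hw hA hB
  · refine Or.inl <| Or.inr <| mem_convexHull_subtriangle (by rw [hx]; abel) (by rw [hP]; abel)
      hα hwa (by linarith) (by linarith) hB hC
  · refine Or.inr <| mem_convexHull_subtriangle (by rw [hx]; abel) (by rw [hP]; abel)
      hβ hwb (by linarith) (by linarith) hC hA

end ConvexHullTriple

section HalfPlane

variable {E : Type*} [NormedAddCommGroup E] [NormedSpace ℝ E]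

theorem AffineMap.isOpenMap_of_ne (f : E →ᵃ[ℝ] ℝ) {x y : E} (h : f x ≠ f y) : IsOpenMap f := by
  have hlin : f.linear ≠ 0 := fun h0 => h <| by
    have := f.linearMap_vsub x y
    simp only [h0, LinearMap.zero_apply, vsub_eq_sub] at this
    linarith
  exact AffineMap.isOpenMap_linear_iff.mp <|
    f.linear.isOpenMap_of_finiteDimensional (LinearMap.surjective_of_ne_zero hlin)

theorem AffineMap.pos_of_mem_interior (f : E →ᵃ[ℝ] ℝ) {x y : E} (h : f x ≠ f y) {s : Set E}
    (hs : ∀ z ∈ s, 0 ≤ f z) {z : E} (hz : z ∈ interior s) : 0 < f z := by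
  have hfs : f '' s ⊆ Set.Ici 0 := by rintro _ ⟨w, hw, rfl⟩; exact hs w hw
  simpa using interior_mono hfs ((f.isOpenMap_of_ne h).image_interior_subset s ⟨z, hz, rfl⟩)

theorem AffineMap.interior_convexHull_inter_eq_empty (f : E →ᵃ[ℝ] ℝ) {x y : E} (h : f x ≠ f y)
    {s t : Set E} (hs : ∀ z ∈ s, 0 ≤ f z) (ht : ∀ z ∈ t, f z ≤ 0) :
    interior (convexHull ℝ s) ∩ interior (convexHull ℝ t) = ∅ := by
  have hs' : ∀ z ∈ convexHull ℝ s, 0 ≤ f z := convexHull_min hs ((convex_Ici 0).affine_preimage f)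
  have ht' : ∀ z ∈ convexHull ℝ t, f z ≤ 0 := convexHull_min ht ((convex_Iic 0).affine_preimage f)
  refine Set.eq_empty_of_forall_notMem fun z ⟨hzs, hzt⟩ => ?_
  have hneg := (-f).pos_of_mem_interior (x := x) (y := y) (by simpa using h)
    (by simpa using ht') hzt
  exact (f.pos_of_mem_interior h hs' hzs).not_gt (by simpa using hneg)

theorem interior_subtriangles_inter_eq_empty {A B C P : E} {wa wb wc : ℝ}
    (hE : Module.finrank ℝ E = 2) (hABC : ¬Collinear ℝ {A, B, C})
    (hP : P = wa • A + wb • B + wc • C) (hwa : 0 ≤ wa) (hwc : 0 < wc) (hw : wa + wb + wc = 1) :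
    interior (convexHull ℝ {A, P, B}) ∩ interior (convexHull ℝ {B, P, C}) = ∅ := by
  have : FiniteDimensional ℝ E := Module.finite_of_finrank_eq_succ hE
  have hind : AffineIndependent ℝ ![A, B, C] := affineIndependent_iff_not_collinear_set.2 hABC
  let b : AffineBasis (Fin 3) ℝ E := ⟨![A, B, C], hind, by
    rw [hind.affineSpan_eq_top_iff_card_eq_finrank_add_one, hE, Fintype.card_fin]⟩
  have hw' : ∑ i, ![wa, wb, wc] i = 1 := by simp [Fin.sum_univ_three, hw]
  have hb : ⇑b = ![A, B, C] := rfl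
  have hPb : P = Finset.univ.affineCombination ℝ b ![wa, wb, wc] := by
    rw [Finset.affineCombination_eq_linear_combination _ _ _ hw', hP]
    simp [Fin.sum_univ_three, hb]
  -- the line `P B` is the zero set of `f`, which is positive at `A` and negative at `C`
  let f : E →ᵃ[ℝ] ℝ := wc • b.coord 0 - wa • b.coord 2
  have hf (z : E) : f z = wc * b.coord 0 z - wa * b.coord 2 z := rfl
  have hfP : f P = 0 := by
    rw [hf, hPb, b.coord_apply_combination_of_mem (Finset.mem_univ _) hw',
      b.coord_apply_combination_of_mem (Finset.mem_univ _) hw']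
    simp [mul_comm]
  have hfA : f A = wc := show f (b 0) = wc by simp [hf, b.coord_apply]
  have hfB : f B = 0 := show f (b 1) = 0 by simp [hf, b.coord_apply]
  have hfC : f C = -wa := show f (b 2) = -wa by simp [hf, b.coord_apply]
  refine f.interior_convexHull_inter_eq_empty (x := A) (y := B) (by rw [hfA, hfB]; exact hwc.ne')
    ?_ ?_
  · rintro z (rfl | rfl | rfl) <;> simp [hfA, hfB, hfP, hwc.le]
  · rintro z (rfl | rfl | rfl) <;> simp [hfC, hfB, hfP, hwa]

end HalfPlane

theorem InnerProductGeometry.pi_div_two_lt_angle_of_inner_neg {V : Type*}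
    [NormedAddCommGroup V] [InnerProductSpace ℝ V] {x y : V} (h : ⟪x, y⟫ < 0) :
    π / 2 < angle x y := by
  by_contra! hle
  have hcos : 0 ≤ cos (angle x y) :=
    cos_nonneg_of_mem_Icc ⟨by linarith [angle_nonneg x y, pi_pos], hle⟩
  rw [← cos_angle_mul_norm_mul_norm] at h
  exact h.not_ge (by positivity)

theorem dist_lt_dist_add_dist_of_not_collinear {V P : Type*} [NormedAddCommGroup V]
    [NormedSpace ℝ V] [StrictConvexSpace ℝ V] [MetricSpace P] [NormedAddTorsor V P] {A B C : P}
    (h : ¬Collinear ℝ {A, B, C}) : dist A C < dist A B + dist B C :=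
  dist_lt_dist_add_dist_iff.2 fun hw => h hw.collinear

theorem triIncenter_rotate (A B C : Plane) : triIncenter B C A = triIncenter A B C := by
  rw [triIncenter, triIncenter, show dist C A + dist A B + dist B C =
    dist B C + dist C A + dist A B by ring]
  abel

theorem exists_pos_weights_triIncenter {A B C : Plane} (hAB : A ≠ B) (hBC : B ≠ C)
    (hCA : C ≠ A) : ∃ wa wb wc : ℝ, 0 < wa ∧ 0 < wb ∧ 0 < wc ∧ wa + wb + wc = 1 ∧
      triIncenter A B C = wa • A + wb • B + wc • C := by
  have ha := dist_pos.2 hBC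
  have hb := dist_pos.2 hCA
  have hc := dist_pos.2 hAB
  exact ⟨_, _, _, by positivity, by positivity, by positivity, by field_simp, rfl⟩

theorem inner_sub_triIncenter (A B C : Plane) (hAB : A ≠ B) :
    ⟪A - triIncenter A B C, B - triIncenter A B C⟫ = dist A B * (dist C A - dist B C - dist A B) *
      (dist C A + dist A B - dist B C) / (2 * (dist B C + dist C A + dist A B)) := by
  rw [triIncenter]
  set a := dist B C
  set b := dist C A
  set c := dist A B
  have hs : a + b + c ≠ 0 := by have := dist_pos.2 hAB; positivity
  set u := A - B
  set v := A - C
  have hAI : A - ((a / (a + b + c)) • A + (b / (a + b + c)) • B + (c / (a + b + c)) • C) =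
      (b / (a + b + c)) • u + (c / (a + b + c)) • v := by
    match_scalars <;> field_simp
    ring
  have hBI : B - ((a / (a + b + c)) • A + (b / (a + b + c)) • B + (c / (a + b + c)) • C) =
      -((a + c) / (a + b + c)) • u + (c / (a + b + c)) • v := by
    match_scalars <;> field_simp <;> ring
  have hu : ‖u‖ = c := (dist_eq_norm A B).symm
  have hv : ‖v‖ = b := by rw [← dist_eq_norm, dist_comm]
  have huv : ‖u - v‖ = a := by
    rw [show u - v = C - B from sub_sub_sub_cancel_left B C A, ← dist_eq_norm, dist_comm]
  have hinner : ⟪u, v⟫ = (c ^ 2 + b ^ 2 - a ^ 2) / 2 := by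
    rw [real_inner_eq_norm_mul_self_add_norm_mul_self_sub_norm_sub_mul_self_div_two, hu, hv, huv]
    ring
  rw [hAI, hBI]
  simp only [inner_add_left, inner_add_right, real_inner_smul_left, real_inner_smul_right,
    real_inner_comm u v, hinner]
  rw [real_inner_self_eq_norm_sq, real_inner_self_eq_norm_sq, hu, hv]
  field_simp
  ring

theorem pi_div_two_lt_angle_triIncenter {A B C : Plane} (h : ¬Collinear ℝ {A, B, C}) :
    π / 2 < ∠ A (triIncenter A B C) B := by
  have hb : dist C A < dist C B + dist B A := dist_lt_dist_add_dist_of_not_collinear <| by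
    rwa [Set.pair_comm B A, Set.insert_comm C A, Set.pair_comm C B]
  have ha : dist B C < dist B A + dist A C := dist_lt_dist_add_dist_of_not_collinear <| by
    rwa [Set.insert_comm B A]
  have hc := dist_pos.2 (ne₁₂_of_not_collinear h)
  rw [dist_comm C B, dist_comm B A] at hb
  rw [dist_comm B A, dist_comm A C] at ha
  refine InnerProductGeometry.pi_div_two_lt_angle_of_inner_neg ?_
  rw [vsub_eq_sub, vsub_eq_sub, inner_sub_triIncenter A B C (ne₁₂_of_not_collinear h)]
  refine div_neg_of_neg_of_pos ?_ (by positivity)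
  exact mul_neg_of_neg_of_pos (mul_neg_of_pos_of_neg hc (by linarith)) (by linarith)

/-- Incenter subdivision: connecting the incenter to the three vertices subdivides
the triangle into three triangles with pairwise disjoint interiors whose union is
the whole triangle, each having an obtuse angle at the incenter. -/
theorem incenter_subdivision (A B C : Plane)
    (hABC : AffineIndependent ℝ ![A, B, C])
    (I : Plane) (hI : I = triIncenter A B C)
    (T : Set Plane) (hT : T = convexHull ℝ {A, B, C})
    (T₁ : Set Plane) (hT₁ : T₁ = convexHull ℝ {A, I, B})
    (T₂ : Set Plane) (hT₂ : T₂ = convexHull ℝ {B, I, C})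
    (T₃ : Set Plane) (hT₃ : T₃ = convexHull ℝ {C, I, A}) :
    (interior T₁ ∩ interior T₂ = ∅) ∧
    (interior T₂ ∩ interior T₃ = ∅) ∧
    (interior T₃ ∩ interior T₁ = ∅) ∧
    T₁ ∪ T₂ ∪ T₃ = T ∧
    ∠ A I B > π / 2 ∧ ∠ B I C > π / 2 ∧ ∠ C I A > π / 2 := by
  subst hI hT hT₁ hT₂ hT₃
  have hABC' : ¬Collinear ℝ {A, B, C} := affineIndependent_iff_not_collinear_set.1 hABC
  have hBCA : ¬Collinear ℝ {B, C, A} := by rwa [Set.pair_comm C A, Set.insert_comm B A]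
  have hCAB : ¬Collinear ℝ {C, A, B} := by rwa [Set.insert_comm C A, Set.pair_comm C B]
  obtain ⟨wa, wb, wc, hwa, hwb, hwc, hw, hIw⟩ := exists_pos_weights_triIncenter
    (ne₁₂_of_not_collinear hABC') (ne₂₃_of_not_collinear hABC') (ne₁₃_of_not_collinear hABC').symm
  have hE : Module.finrank ℝ Plane = 2 := finrank_euclideanSpace_fin
  refine ⟨interior_subtriangles_inter_eq_empty hE hABC' hIw hwa.le hwc hw,
    interior_subtriangles_inter_eq_empty hE hBCA (by rw [hIw]; abel) hwb.le hwa (by linarith),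
    interior_subtriangles_inter_eq_empty hE hCAB (by rw [hIw]; abel) hwc.le hwb (by linarith),
    subtriangles_union_eq_convexHull hIw hwa hwb hwc hw, ?_, ?_, ?_⟩
  · exact pi_div_two_lt_angle_triIncenter hABC'
  · rw [← triIncenter_rotate A B C]
    exact pi_div_two_lt_angle_triIncenter hBCA
  · rw [← triIncenter_rotate A B C, ← triIncenter_rotate B C A]
    exact pi_div_two_lt_angle_triIncenter hCAB
end
end

section
/- Free-regions lemma for triangles: let A, B, C ∈ ℝ² be affinely independent and T = convexHull ℝ {A, B, C}. Then there exist β > 0 and r > 0 with the following property. Define the edge free region for the edge AB as E_AB = {p ∈ T | ∠ p A B ≤ β ∧ ∠ p B A ≤ β}, and similarly E_BC and E_CA; define the vertex free region at A as W_A = {p ∈ T | dist p A ≤ r ∧ ∠ p A B > β ∧ ∠ p A C > β}, and similarly W_B and W_C. Then the intersection of any two distinct sets among the six sets E_AB, E_BC, E_CA, W_A, W_B, W_C is contained in the vertex set {A, B, C}. -/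
noncomputable section

open EuclideanGeometry Real

open scoped RealInnerProductSpace

private lemma arccos_le_arccos' {x y : ℝ} (h : x ≤ y) : Real.arccos y ≤ Real.arccos x := by
  unfold Real.arccos
  linarith [Real.monotone_arcsin h]

private lemma angle_triangle_unit {V : Type*} [NormedAddCommGroup V] [InnerProductSpace ℝ V]
    {u v w : V} (hu : ‖u‖ = 1) (hv : ‖v‖ = 1) (hw : ‖w‖ = 1) :
    InnerProductGeometry.angle u w ≤
      InnerProductGeometry.angle u v + InnerProductGeometry.angle v w := by
  have defuv : InnerProductGeometry.angle u v = Real.arccos ⟪u, v⟫ := by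
    rw [InnerProductGeometry.angle, hu, hv, mul_one, div_one]
  have defvw : InnerProductGeometry.angle v w = Real.arccos ⟪v, w⟫ := by
    rw [InnerProductGeometry.angle, hv, hw, mul_one, div_one]
  have defuw : InnerProductGeometry.angle u w = Real.arccos ⟪u, w⟫ := by
    rw [InnerProductGeometry.angle, hu, hw, mul_one, div_one]
  rw [defuv, defvw, defuw]
  have ha1 : |(⟪u, v⟫ : ℝ)| ≤ 1 := by simpa [hu, hv] using abs_real_inner_le_norm u v
  have hb1 : |(⟪v, w⟫ : ℝ)| ≤ 1 := by simpa [hv, hw] using abs_real_inner_le_norm v w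
  have ha1' := abs_le.1 ha1
  have hb1' := abs_le.1 hb1
  by_cases hs : Real.arccos ⟪u, v⟫ + Real.arccos ⟪v, w⟫ ≤ π
  · have hna : ‖u - ⟪u, v⟫ • v‖ = Real.sqrt (1 - ⟪u, v⟫ ^ 2) := by
      have h2 : ‖u - ⟪u, v⟫ • v‖ ^ 2 = 1 - ⟪u, v⟫ ^ 2 := by
        rw [← real_inner_self_eq_norm_sq]
        simp only [inner_sub_left, inner_sub_right, real_inner_smul_left,
          real_inner_smul_right, real_inner_comm v u]
        rw [real_inner_self_eq_norm_sq, real_inner_self_eq_norm_sq, hu, hv]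
        ring
      rw [← h2, Real.sqrt_sq (norm_nonneg _)]
    have hnb : ‖w - ⟪v, w⟫ • v‖ = Real.sqrt (1 - ⟪v, w⟫ ^ 2) := by
      have h2 : ‖w - ⟪v, w⟫ • v‖ ^ 2 = 1 - ⟪v, w⟫ ^ 2 := by
        rw [← real_inner_self_eq_norm_sq]
        simp only [inner_sub_left, inner_sub_right, real_inner_smul_left,
          real_inner_smul_right, real_inner_comm v w]
        rw [real_inner_self_eq_norm_sq, real_inner_self_eq_norm_sq, hv, hw]
        ring
      rw [← h2, Real.sqrt_sq (norm_nonneg _)]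
    have hinner : ⟪u - ⟪u, v⟫ • v, w - ⟪v, w⟫ • v⟫ = ⟪u, w⟫ - ⟪u, v⟫ * ⟪v, w⟫ := by
      simp only [inner_sub_left, inner_sub_right, real_inner_smul_left, real_inner_smul_right,
        real_inner_comm v u]
      rw [real_inner_self_eq_norm_sq, hv]
      ring
    have hcs := abs_real_inner_le_norm (u - ⟪u, v⟫ • v) (w - ⟪v, w⟫ • v)
    rw [hinner, hna, hnb] at hcs
    have hcs' := (abs_le.1 hcs).1
    have hkey : Real.cos (Real.arccos ⟪u, v⟫ + Real.arccos ⟪v, w⟫) ≤ ⟪u, w⟫ := by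
      rw [Real.cos_add, Real.cos_arccos ha1'.1 ha1'.2, Real.cos_arccos hb1'.1 hb1'.2,
        Real.sin_arccos, Real.sin_arccos]
      nlinarith [hcs']
    have h1 := arccos_le_arccos' hkey
    rwa [Real.arccos_cos (add_nonneg (Real.arccos_nonneg _) (Real.arccos_nonneg _)) hs] at h1
  · linarith [not_le.1 hs, Real.arccos_le_pi (⟪u, w⟫ : ℝ)]

private lemma angle_triangle_vec {V : Type*} [NormedAddCommGroup V] [InnerProductSpace ℝ V]
    {x y z : V} (hx : x ≠ 0) (hy : y ≠ 0) (hz : z ≠ 0) :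
    InnerProductGeometry.angle x z ≤
      InnerProductGeometry.angle x y + InnerProductGeometry.angle y z := by
  have hx' : (0 : ℝ) < ‖x‖⁻¹ := inv_pos.2 (norm_pos_iff.2 hx)
  have hy' : (0 : ℝ) < ‖y‖⁻¹ := inv_pos.2 (norm_pos_iff.2 hy)
  have hz' : (0 : ℝ) < ‖z‖⁻¹ := inv_pos.2 (norm_pos_iff.2 hz)
  rw [← InnerProductGeometry.angle_smul_left_of_pos x z hx',
    ← InnerProductGeometry.angle_smul_right_of_pos _ z hz',
    ← InnerProductGeometry.angle_smul_left_of_pos x y hx',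
    ← InnerProductGeometry.angle_smul_right_of_pos _ y hy',
    ← InnerProductGeometry.angle_smul_left_of_pos y z hy',
    ← InnerProductGeometry.angle_smul_right_of_pos _ z hz']
  exact angle_triangle_unit (norm_smul_inv_norm hx) (norm_smul_inv_norm hy) (norm_smul_inv_norm hz)

private lemma angle_points_triangle {P : Type*} [MetricSpace P]
    {V : Type*} [NormedAddCommGroup V] [InnerProductSpace ℝ V] [NormedAddTorsor V P]
    (A B C p : P) (hA : A ≠ B) (hC : C ≠ B) (hp : p ≠ B) :
    ∠ A B C ≤ ∠ A B p + ∠ p B C := by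
  unfold EuclideanGeometry.angle
  exact angle_triangle_vec (vsub_ne_zero.2 hA) (vsub_ne_zero.2 hp) (vsub_ne_zero.2 hC)

/-- Free-regions lemma for triangles: there are `β > 0` and `r > 0` such that the
three edge free regions and the three vertex free regions of the triangle `ABC`
meet pairwise only at the vertices. -/
theorem free_regions (A B C : Plane)
    (hABC : AffineIndependent ℝ ![A, B, C])
    (T : Set Plane) (hT : T = convexHull ℝ {A, B, C}) :
    ∃ β > (0 : ℝ), ∃ r > (0 : ℝ),
      ∀ F : Fin 6 → Set Plane,
        F = ![{p ∈ T | ∠ p A B ≤ β ∧ ∠ p B A ≤ β},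
              {p ∈ T | ∠ p B C ≤ β ∧ ∠ p C B ≤ β},
              {p ∈ T | ∠ p C A ≤ β ∧ ∠ p A C ≤ β},
              {p ∈ T | dist p A ≤ r ∧ ∠ p A B > β ∧ ∠ p A C > β},
              {p ∈ T | dist p B ≤ r ∧ ∠ p B A > β ∧ ∠ p B C > β},
              {p ∈ T | dist p C ≤ r ∧ ∠ p C A > β ∧ ∠ p C B > β}] →
        ∀ i j : Fin 6, i ≠ j → F i ∩ F j ⊆ {A, B, C} := by
  have hnc : ¬Collinear ℝ ({A, B, C} : Set Plane) :=
    affineIndependent_iff_not_collinear_set.1 hABC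
  have hAB : A ≠ B := by rintro rfl; exact hnc (by simpa using collinear_pair ℝ A C)
  have hAC : A ≠ C := by
    rintro rfl
    refine hnc ?_
    have he : ({A, B, A} : Set Plane) = {A, B} := by ext x; simp; tauto
    rw [he]; exact collinear_pair ℝ A B
  have hBC : B ≠ C := by
    rintro rfl
    refine hnc ?_
    have he : ({A, B, B} : Set Plane) = {A, B} := by ext x; simp
    rw [he]; exact collinear_pair ℝ A B
  have hncBAC : ¬Collinear ℝ ({B, A, C} : Set Plane) := by rwa [Set.insert_comm]
  have hncACB : ¬Collinear ℝ ({A, C, B} : Set Plane) := by rwa [Set.pair_comm C B]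
  have hA0 : 0 < ∠ B A C := angle_pos_of_not_collinear hncBAC
  have hB0 : 0 < ∠ A B C := angle_pos_of_not_collinear hnc
  have hC0 : 0 < ∠ A C B := angle_pos_of_not_collinear hncACB
  set α := min (∠ B A C) (min (∠ A B C) (∠ A C B)) with hαdef
  have hα : 0 < α := lt_min hA0 (lt_min hB0 hC0)
  have hαA : α ≤ ∠ B A C := min_le_left _ _
  have hαB : α ≤ ∠ A B C := (min_le_right _ _).trans (min_le_left _ _)
  have hαC : α ≤ ∠ A C B := (min_le_right _ _).trans (min_le_right _ _)
  set β := α / 3 with hβdef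
  have hβ : 0 < β := by positivity
  -- continuity radii
  have key : ∀ X Y Z : Plane, X ≠ Y → Z ≠ Y → β < ∠ X Y Z →
      ∃ ρ > (0:ℝ), ∀ p : Plane, dist p X ≤ ρ → β < ∠ p Y Z := by
    intro X Y Z h1 h2 hXYZ
    have hc : ContinuousAt (fun p : Plane => ∠ p Y Z) X := by
      have h := EuclideanGeometry.continuousAt_angle (x := (X, Y, Z)) h1 h2
      have hf : ContinuousAt (fun p : Plane => (p, Y, Z)) X :=
        (continuous_id.prodMk continuous_const).continuousAt
      have h2 : ContinuousAt ((fun y : Plane × Plane × Plane => ∠ y.1 y.2.1 y.2.2) ∘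
          (fun p : Plane => (p, Y, Z))) X :=
        ContinuousAt.comp (f := fun p : Plane => (p, Y, Z)) h hf
      exact h2
    obtain ⟨δ, hδ, hball⟩ := Metric.continuousAt_iff.1 hc (∠ X Y Z - β) (by linarith)
    refine ⟨δ / 2, by positivity, fun p hp => ?_⟩
    have h3 := hball (show dist p X < δ by linarith)
    rw [Real.dist_eq] at h3
    have h4 := abs_lt.1 h3
    linarith [h4.1]
  obtain ⟨r1, hr1pos, hr1⟩ := key C A B hAC.symm hAB.symm (by
    rw [EuclideanGeometry.angle_comm]; linarith)
  obtain ⟨r2, hr2pos, hr2⟩ := key A B C hAB hBC.symm (by linarith)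
  obtain ⟨r3, hr3pos, hr3⟩ := key B C A hBC hAC (by
    rw [EuclideanGeometry.angle_comm]; linarith)
  set d := min (dist A B) (min (dist A C) (dist B C)) with hddef
  have hd : 0 < d :=
    lt_min (dist_pos.2 hAB) (lt_min (dist_pos.2 hAC) (dist_pos.2 hBC))
  set r := min (min r1 r2) (min r3 (d / 3)) with hrdef
  have hr : 0 < r := lt_min (lt_min hr1pos hr2pos) (lt_min hr3pos (by positivity))
  have hrr1 : r ≤ r1 := (min_le_left _ _).trans (min_le_left _ _)
  have hrr2 : r ≤ r2 := (min_le_left _ _).trans (min_le_right _ _)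
  have hrr3 : r ≤ r3 := (min_le_right _ _).trans (min_le_left _ _)
  have hrd : r ≤ d / 3 := (min_le_right _ _).trans (min_le_right _ _)
  -- shared-vertex edge-edge keys
  have key01 : ∀ p : Plane, ∠ p B A ≤ β → ∠ p B C ≤ β → p = B := by
    intro p h1 h2
    by_contra hpB
    have htri := angle_points_triangle A B C p hAB hBC.symm hpB
    rw [EuclideanGeometry.angle_comm A B p] at htri
    linarith
  have key02 : ∀ p : Plane, ∠ p A B ≤ β → ∠ p A C ≤ β → p = A := by
    intro p h1 h2
    by_contra hpA
    have htri := angle_points_triangle B A C p hAB.symm hAC.symm hpA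
    rw [EuclideanGeometry.angle_comm B A p] at htri
    linarith
  have key12 : ∀ p : Plane, ∠ p C B ≤ β → ∠ p C A ≤ β → p = C := by
    intro p h1 h2
    by_contra hpC
    have htri := angle_points_triangle B C A p hBC hAC hpC
    rw [EuclideanGeometry.angle_comm B C p] at htri
    rw [EuclideanGeometry.angle_comm B C A] at htri
    linarith
  -- vertex-vertex keys
  have keyAB : ∀ p : Plane, dist p A ≤ r → dist p B ≤ r → False := by
    intro p h1 h2
    have h3 := dist_triangle A p B
    rw [dist_comm A p] at h3
    have : d ≤ dist A B := min_le_left _ _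
    linarith
  have keyAC : ∀ p : Plane, dist p A ≤ r → dist p C ≤ r → False := by
    intro p h1 h2
    have h3 := dist_triangle A p C
    rw [dist_comm A p] at h3
    have : d ≤ dist A C := (min_le_right _ _).trans (min_le_left _ _)
    linarith
  have keyBC : ∀ p : Plane, dist p B ≤ r → dist p C ≤ r → False := by
    intro p h1 h2
    have h3 := dist_triangle B p C
    rw [dist_comm B p] at h3
    have : d ≤ dist B C := (min_le_right _ _).trans (min_le_right _ _)
    linarith
  refine ⟨β, hβ, r, hr, ?_⟩
  intro F hF i j hij
  subst hF
  have memABC : ∀ p : Plane, p = A ∨ p = B ∨ p = C → p ∈ ({A, B, C} : Set Plane) := by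
    intro p h; simpa using h
  fin_cases i <;> fin_cases j
  · exact absurd rfl hij
  · intro p hp
    obtain ⟨hp1, hp2⟩ := hp
    exact memABC p (Or.inr (Or.inl (key01 p hp1.2.2 hp2.2.1)))
  · intro p hp
    obtain ⟨hp1, hp2⟩ := hp
    exact memABC p (Or.inl (key02 p hp1.2.1 hp2.2.2))
  · intro p hp
    obtain ⟨hp1, hp2⟩ := hp
    exact absurd hp1.2.1 (not_le.2 hp2.2.2.1)
  · intro p hp
    obtain ⟨hp1, hp2⟩ := hp
    exact absurd hp1.2.2 (not_le.2 hp2.2.2.1)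
  · intro p hp
    obtain ⟨hp1, hp2⟩ := hp
    exact absurd hp1.2.1 (not_le.2 (hr1 p (hp2.2.1.trans hrr1)))
  · intro p hp
    obtain ⟨hp1, hp2⟩ := hp
    exact memABC p (Or.inr (Or.inl (key01 p hp2.2.2 hp1.2.1)))
  · exact absurd rfl hij
  · intro p hp
    obtain ⟨hp1, hp2⟩ := hp
    exact memABC p (Or.inr (Or.inr (key12 p hp1.2.2 hp2.2.1)))
  · intro p hp
    obtain ⟨hp1, hp2⟩ := hp
    exact absurd hp1.2.1 (not_le.2 (hr2 p (hp2.2.1.trans hrr2)))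
  · intro p hp
    obtain ⟨hp1, hp2⟩ := hp
    exact absurd hp1.2.1 (not_le.2 hp2.2.2.2)
  · intro p hp
    obtain ⟨hp1, hp2⟩ := hp
    exact absurd hp1.2.2 (not_le.2 hp2.2.2.2)
  · intro p hp
    obtain ⟨hp1, hp2⟩ := hp
    exact memABC p (Or.inl (key02 p hp2.2.1 hp1.2.2))
  · intro p hp
    obtain ⟨hp1, hp2⟩ := hp
    exact memABC p (Or.inr (Or.inr (key12 p hp2.2.2 hp1.2.1)))
  · exact absurd rfl hij
  · intro p hp
    obtain ⟨hp1, hp2⟩ := hp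
    exact absurd hp1.2.2 (not_le.2 hp2.2.2.2)
  · intro p hp
    obtain ⟨hp1, hp2⟩ := hp
    exact absurd hp1.2.1 (not_le.2 (hr3 p (hp2.2.1.trans hrr3)))
  · intro p hp
    obtain ⟨hp1, hp2⟩ := hp
    exact absurd hp1.2.1 (not_le.2 hp2.2.2.1)
  · intro p hp
    obtain ⟨hp1, hp2⟩ := hp
    exact absurd hp2.2.1 (not_le.2 hp1.2.2.1)
  · intro p hp
    obtain ⟨hp1, hp2⟩ := hp
    exact absurd hp2.2.1 (not_le.2 (hr2 p (hp1.2.1.trans hrr2)))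
  · intro p hp
    obtain ⟨hp1, hp2⟩ := hp
    exact absurd hp2.2.2 (not_le.2 hp1.2.2.2)
  · exact absurd rfl hij
  · intro p hp
    obtain ⟨hp1, hp2⟩ := hp
    exact (keyAB p hp1.2.1 hp2.2.1).elim
  · intro p hp
    obtain ⟨hp1, hp2⟩ := hp
    exact (keyAC p hp1.2.1 hp2.2.1).elim
  · intro p hp
    obtain ⟨hp1, hp2⟩ := hp
    exact absurd hp2.2.2 (not_le.2 hp1.2.2.1)
  · intro p hp
    obtain ⟨hp1, hp2⟩ := hp
    exact absurd hp2.2.1 (not_le.2 hp1.2.2.2)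
  · intro p hp
    obtain ⟨hp1, hp2⟩ := hp
    exact absurd hp2.2.1 (not_le.2 (hr3 p (hp1.2.1.trans hrr3)))
  · intro p hp
    obtain ⟨hp1, hp2⟩ := hp
    exact (keyAB p hp2.2.1 hp1.2.1).elim
  · exact absurd rfl hij
  · intro p hp
    obtain ⟨hp1, hp2⟩ := hp
    exact (keyBC p hp1.2.1 hp2.2.1).elim
  · intro p hp
    obtain ⟨hp1, hp2⟩ := hp
    exact absurd hp2.2.1 (not_le.2 (hr1 p (hp1.2.1.trans hrr1)))
  · intro p hp
    obtain ⟨hp1, hp2⟩ := hp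
    exact absurd hp2.2.2 (not_le.2 hp1.2.2.2)
  · intro p hp
    obtain ⟨hp1, hp2⟩ := hp
    exact absurd hp2.2.1 (not_le.2 hp1.2.2.1)
  · intro p hp
    obtain ⟨hp1, hp2⟩ := hp
    exact (keyAC p hp2.2.1 hp1.2.1).elim
  · intro p hp
    obtain ⟨hp1, hp2⟩ := hp
    exact (keyBC p hp2.2.1 hp1.2.1).elim
  · exact absurd rfl hij
end
end

section
/- Rational rotation approximation via Pythagorean triples: there exists a constant C > 0 such that for every point u on the unit circle of ℝ² and every δ with 0 < δ ≤ 1, there exist integers a, b, c with 0 < c, (c : ℝ) ≤ C/δ², a² + b² = c², and the point with coordinates (a/c, b/c) lies at distance less than δ from u. -/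
noncomputable section

/-- The point of the plane with the given coordinates. -/
def pt (x y : ℝ) : Plane := (EuclideanSpace.equiv (Fin 2) ℝ).symm ![x, y]

/-! The rational parametrization `t ↦ ((1 - t²)/(1 + t²), 2t/(1 + t²))` of the unit circle
(inverse stereographic projection from `(-1, 0)`) is 2-Lipschitz and sends `t = n/m` to the
Pythagorean point `((m² - n²)/(m² + n²), 2mn/(m² + n²))`. A point of the circle with nonnegative
first coordinate has a parameter `t ∈ [-1, 1]`; rounding `m t` to an integer `n` gives
`|t - n/m| ≤ 1/(2m)`, hence a Pythagorean point within `1/m` of denominator at most `2m²`.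
Taking `m ≈ 1/δ` gives the bound `8/δ²`; the other half of the circle is reached by antipody. -/

open Metric

lemma dist_pt (p q x y : ℝ) : dist (pt p q) (pt x y) = √((p - x) ^ 2 + (q - y) ^ 2) := by
  simp [pt, EuclideanSpace.dist_eq, Fin.sum_univ_two, Real.dist_eq, sq_abs]

lemma pt_neg (x y : ℝ) : pt (-x) (-y) = -pt x y := by
  ext i; fin_cases i <;> simp [pt]

lemma pt_eta (u : Plane) : pt (u 0) (u 1) = u := by
  ext i; fin_cases i <;> simp [pt]

lemma sq_apply_zero_add_sq_apply_one {u : Plane} (hu : u ∈ sphere (0 : Plane) 1) :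
    u 0 ^ 2 + u 1 ^ 2 = 1 := by
  have hnorm : ‖u‖ ^ 2 = 1 := by rw [mem_sphere_zero_iff_norm.mp hu, one_pow]
  simpa [EuclideanSpace.norm_sq_eq, Fin.sum_univ_two] using hnorm

def stereoInv (t : ℝ) : Plane := pt ((1 - t ^ 2) / (1 + t ^ 2)) (2 * t / (1 + t ^ 2))

lemma dist_stereoInv_le (s t : ℝ) : dist (stereoInv s) (stereoInv t) ≤ 2 * |s - t| := by
  have hs : 0 < 1 + s ^ 2 := by positivity
  have ht : 0 < 1 + t ^ 2 := by positivity
  have hsq : ((1 - s ^ 2) / (1 + s ^ 2) - (1 - t ^ 2) / (1 + t ^ 2)) ^ 2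
      + (2 * s / (1 + s ^ 2) - 2 * t / (1 + t ^ 2)) ^ 2
      = (2 * |s - t|) ^ 2 / ((1 + s ^ 2) * (1 + t ^ 2)) := by
    rw [mul_pow, sq_abs]; field_simp; ring
  rw [stereoInv, stereoInv, dist_pt, Real.sqrt_le_left (by positivity), hsq]
  exact div_le_self (by positivity) (by nlinarith [sq_nonneg (s * t)])

lemma stereoInv_div (m n : ℝ) (hm : m ≠ 0) :
    stereoInv (n / m) = pt ((m ^ 2 - n ^ 2) / (m ^ 2 + n ^ 2)) (2 * m * n / (m ^ 2 + n ^ 2)) := by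
  have hmn : m ^ 2 + n ^ 2 ≠ 0 := by positivity
  rw [stereoInv]; congr 1 <;> field_simp

lemma stereoInv_div_one_add {x y : ℝ} (hxy : x ^ 2 + y ^ 2 = 1) (hx : 0 ≤ x) :
    stereoInv (y / (1 + x)) = pt x y := by
  have h1x : 0 < 1 + x := by linarith
  rw [stereoInv]; congr 1 <;> field_simp
  · linear_combination -(1 + x) * hxy
  · linear_combination -y * hxy

lemma abs_div_one_add_le_one {x y : ℝ} (hxy : x ^ 2 + y ^ 2 = 1) (hx : 0 ≤ x) :
    |y / (1 + x)| ≤ 1 := by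
  have h1x : 0 < 1 + x := by linarith
  rw [abs_le, le_div_iff₀ h1x, div_le_iff₀ h1x]
  constructor <;> nlinarith

lemma exists_int_abs_le_abs_sub_div_le {t : ℝ} (ht : |t| ≤ 1) {m : ℕ} (hm : 0 < m) :
    ∃ n : ℤ, |n| ≤ m ∧ |t - n / m| ≤ 1 / (2 * m) := by
  have hm' : (0 : ℝ) < m := by exact_mod_cast hm
  refine ⟨round (m * t), ?_, ?_⟩
  · have hround := abs_le.mp (abs_sub_round ((m : ℝ) * t))
    have hmt := abs_le.mp (show |(m : ℝ) * t| ≤ m by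
      rw [abs_mul, Nat.abs_cast]; exact mul_le_of_le_one_right hm'.le ht)
    have hlt : (|round ((m : ℝ) * t)| : ℝ) < m + 1 := abs_lt.mpr ⟨by linarith, by linarith⟩
    have hlt' : |round ((m : ℝ) * t)| < m + 1 := by exact_mod_cast hlt
    omega
  · calc |t - round ((m : ℝ) * t) / m| = |(m * t - round ((m : ℝ) * t)) / m| := by
          congr 1; field_simp
      _ = |m * t - round ((m : ℝ) * t)| / m := by rw [abs_div, abs_of_pos hm']
      _ ≤ 1 / 2 / m := by gcongr; exact abs_sub_round _
      _ = 1 / (2 * m) := by ring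

lemma exists_pythagorean_dist_stereoInv_le {t : ℝ} (ht : |t| ≤ 1) {m : ℕ} (hm : 0 < m) :
    ∃ a b c : ℤ, 0 < c ∧ (c : ℝ) ≤ 2 * m ^ 2 ∧ a ^ 2 + b ^ 2 = c ^ 2 ∧
      dist (pt ((a : ℝ) / c) ((b : ℝ) / c)) (stereoInv t) ≤ 1 / m := by
  obtain ⟨n, hnm, hn⟩ := exists_int_abs_le_abs_sub_div_le ht hm
  have hm' : (0 : ℝ) < m := by exact_mod_cast hm
  have hn2 : (n : ℝ) ^ 2 ≤ (m : ℝ) ^ 2 := by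
    rw [sq_le_sq, Nat.abs_cast]; exact_mod_cast hnm
  refine ⟨m ^ 2 - n ^ 2, 2 * m * n, m ^ 2 + n ^ 2, by positivity, ?_, by ring, ?_⟩
  · push_cast; linarith
  · push_cast
    rw [← stereoInv_div _ _ hm'.ne']
    calc dist (stereoInv (n / m)) (stereoInv t) ≤ 2 * |n / m - t| := dist_stereoInv_le _ _
      _ ≤ 2 * (1 / (2 * m)) := by rw [abs_sub_comm]; gcongr
      _ = 1 / m := by field_simp

lemma exists_pythagorean_dist_le {u : Plane} (hu : u ∈ sphere (0 : Plane) 1) {m : ℕ}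
    (hm : 0 < m) :
    ∃ a b c : ℤ, 0 < c ∧ (c : ℝ) ≤ 2 * m ^ 2 ∧ a ^ 2 + b ^ 2 = c ^ 2 ∧
      dist (pt ((a : ℝ) / c) ((b : ℝ) / c)) u ≤ 1 / m := by
  have hxy := sq_apply_zero_add_sq_apply_one hu
  rcases le_or_gt 0 (u 0) with hx | hx
  · rw [← pt_eta u, ← stereoInv_div_one_add hxy hx]
    exact exists_pythagorean_dist_stereoInv_le (abs_div_one_add_le_one hxy hx) hm
  have hxy' : (-u 0) ^ 2 + (-u 1) ^ 2 = 1 := by linear_combination hxy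
  obtain ⟨a, b, c, hc, hcm, hpyth, hdist⟩ := exists_pythagorean_dist_stereoInv_le
    (abs_div_one_add_le_one hxy' (by linarith)) hm
  refine ⟨-a, -b, c, hc, hcm, by linear_combination hpyth, ?_⟩
  rw [Int.cast_neg, Int.cast_neg, neg_div, neg_div, pt_neg]
  rwa [stereoInv_div_one_add hxy' (by linarith), pt_neg, ← dist_neg_neg, neg_neg,
    pt_eta] at hdist

/-- Rational rotation approximation via Pythagorean triples: there is a constant
`C > 0` such that any point of the unit circle can be approximated within any
`δ ∈ (0, 1]` by a point `(a/c, b/c)` with `a² + b² = c²` and `c ≤ C/δ²`. -/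
theorem rational_rotation_approx :
    ∃ C > (0 : ℝ), ∀ u ∈ Metric.sphere (0 : Plane) 1,
      ∀ δ : ℝ, 0 < δ → δ ≤ 1 →
        ∃ a b c : ℤ, 0 < c ∧ (c : ℝ) ≤ C / δ ^ 2 ∧ a ^ 2 + b ^ 2 = c ^ 2 ∧
          dist (pt ((a : ℝ) / c) ((b : ℝ) / c)) u < δ := by
  refine ⟨8, by norm_num, fun u hu δ hδ hδ1 => ?_⟩
  set m := ⌊δ⁻¹⌋₊ + 1
  have hδm : δ⁻¹ < m := by push_cast [m]; exact Nat.lt_floor_add_one _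
  have hm2 : (m : ℝ) ≤ 2 / δ := by
    have hfloor : (⌊δ⁻¹⌋₊ : ℝ) ≤ δ⁻¹ := Nat.floor_le (by positivity)
    have hone : 1 ≤ δ⁻¹ := one_le_inv₀ hδ |>.mpr hδ1
    push_cast [m]; rw [div_eq_mul_inv]; linarith
  have hm : 0 < m := Nat.succ_pos _
  obtain ⟨a, b, c, hc, hcm, hpyth, hdist⟩ := exists_pythagorean_dist_le hu hm
  refine ⟨a, b, c, hc, hcm.trans ?_, hpyth, hdist.trans_lt ?_⟩
  · calc 2 * (m : ℝ) ^ 2 ≤ 2 * (2 / δ) ^ 2 := by gcongr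
      _ = 8 / δ ^ 2 := by ring
  · rwa [one_div, inv_lt_comm₀ (by positivity) hδ]
end
end

section
/- Right angle in the seven-piece refinement: let D, E, F ∈ ℝ² be affinely independent with incenter I. Let P be a point on the segment [D, E] and P' a point on the segment [D, F] such that ⟪P − I, D − I⟫ = 0 and ⟪P' − I, D − I⟫ = 0 (so P and P' lie on the line through I perpendicular to DI). Let Q be the reflection of P across the line through E and I (the affine span of {E, I}). Then ∠ P Q P' = π/2. -/
/-!
The incenter `I` lies on the bisector of the angle at `D`, so the perpendicular to `DI` through `I`
cuts the sides `DE`, `DF` at points symmetric about `I`: `I` is the midpoint of `PP'`. Reflection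
in a line through `I` preserves distances to `I`, so `Q` lies on the circle with diameter `PP'`,
and Thales' theorem gives the right angle.
-/

noncomputable section

open EuclideanGeometry Real
open scoped RealInnerProductSpace

section Bisector

variable {V : Type*} [NormedAddCommGroup V] [InnerProductSpace ℝ V]

lemma smul_sub_smul_add_eq_smul_sub_of_inner_eq_zero {u w : V} (hu : ‖u‖ = 1) (hw : ‖w‖ = 1)
    (huw : u + w ≠ 0) {x y : ℝ} (h : ⟪x • u - y • (u + w), u + w⟫ = 0) :
    x • u - y • (u + w) = y • (u - w) := by
  have huu : ⟪u, u⟫ = 1 := by rw [real_inner_self_eq_norm_sq, hu, one_pow]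
  have hww : ⟪w, w⟫ = 1 := by rw [real_inner_self_eq_norm_sq, hw, one_pow]
  have hsq : ⟪u + w, u + w⟫ = 2 * (1 + ⟪u, w⟫) := by
    rw [inner_add_left, inner_add_right, inner_add_right, huu, hww, real_inner_comm w u]; ring
  have hk : 1 + ⟪u, w⟫ ≠ 0 := by
    intro hk
    apply huw
    rw [← inner_self_eq_zero (𝕜 := ℝ), hsq, hk, mul_zero]
  have hx : x = 2 * y := by
    rw [inner_sub_left, real_inner_smul_left, real_inner_smul_left, hsq, inner_add_right, huu] at h
    exact mul_right_cancel₀ hk (by linear_combination h)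
  rw [hx]
  module

/-- A line through a point `I` on the bisector of the angle at `D` spanned by the unit vectors
`u`, `w`, perpendicular to `DI`, meets the two sides at points symmetric about `I`. -/
lemma sub_eq_smul_sub_of_inner_eq_zero {D I P u w : V} (hu : ‖u‖ = 1) (hw : ‖w‖ = 1)
    (huw : u + w ≠ 0) {r : ℝ} (hr : r ≠ 0) (hI : I - D = r • (u + w)) {x : ℝ}
    (hP : P - D = x • u) (hperp : ⟪P - I, D - I⟫ = 0) :
    P - I = r • (u - w) := by
  have hPI : P - I = x • u - r • (u + w) := by
    rw [← hP, ← hI]; abel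
  have hDI : D - I = -r • (u + w) := by
    rw [neg_smul, ← hI]; abel
  rw [hPI, hDI, real_inner_smul_right, mul_eq_zero, neg_eq_zero] at hperp
  rw [hPI]
  exact smul_sub_smul_add_eq_smul_sub_of_inner_eq_zero hu hw huw (hperp.resolve_left hr)

lemma norm_inv_dist_smul_sub {D E : V} (h : D ≠ E) : ‖(dist D E)⁻¹ • (E - D)‖ = 1 := by
  rw [norm_smul, norm_inv, Real.norm_eq_abs, abs_dist, dist_eq_norm', inv_mul_cancel₀]
  exact norm_ne_zero_iff.2 (sub_ne_zero.2 h.symm)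

lemma exists_sub_eq_smul_of_mem_segment {D E P : V} (h : D ≠ E) (hP : P ∈ segment ℝ D E) :
    ∃ x : ℝ, P - D = x • ((dist D E)⁻¹ • (E - D)) := by
  rw [segment_eq_image'] at hP
  obtain ⟨t, -, rfl⟩ := hP
  refine ⟨t * dist D E, ?_⟩
  rw [smul_smul, mul_assoc, mul_inv_cancel₀ (dist_ne_zero.2 h), mul_one, add_sub_cancel_left]

lemma inv_dist_smul_sub_add_ne_zero {D E F : V} (h : AffineIndependent ℝ ![D, E, F]) :
    (dist D E)⁻¹ • (E - D) + (dist D F)⁻¹ • (F - D) ≠ 0 := by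
  have hDE : D ≠ E := by simpa using h.injective.ne (show (0 : Fin 3) ≠ 1 by decide)
  have hDF : D ≠ F := by simpa using h.injective.ne (show (0 : Fin 3) ≠ 2 by decide)
  intro h0
  have hF : F - D = (-(dist D F / dist D E)) • (E - D) := by
    have hsum := congrArg (dist D F • ·) h0
    simp only [smul_add, smul_smul, mul_inv_cancel₀ (dist_ne_zero.2 hDF), one_smul,
      smul_zero] at hsum
    rw [eq_neg_of_add_eq_zero_right hsum, neg_smul, div_eq_mul_inv]
  apply affineIndependent_iff_not_collinear_set.1 h
  rw [collinear_iff_of_mem (p₀ := D) (by simp)]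
  refine ⟨E - D, ?_⟩
  simp only [Set.mem_insert_iff, Set.mem_singleton_iff, vadd_eq_add, forall_eq_or_imp, forall_eq]
  refine ⟨⟨0, by simp⟩, ⟨1, by simp⟩, ⟨_, by rw [← hF]; abel⟩⟩

end Bisector

lemma angle_eq_pi_div_two_of_midpoint_eq_of_dist_eq {V Pt : Type*} [NormedAddCommGroup V]
    [InnerProductSpace ℝ V] [MetricSpace Pt] [NormedAddTorsor V Pt] {A B C O : Pt}
    (hO : midpoint ℝ A C = O) (hB : dist B O = dist A O) : ∠ A B C = π / 2 :=
  (Sphere.angle_eq_pi_div_two_iff_mem_sphere_of_isDiameter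
    (s := ⟨O, dist A O⟩) ⟨mem_sphere.2 rfl, hO⟩).2 (mem_sphere.2 hB)

lemma triIncenter_sub_eq {D E F : Plane} (hDE : D ≠ E) (hDF : D ≠ F) :
    triIncenter D E F - D = (dist D E * dist D F / (dist E F + dist F D + dist D E)) •
      ((dist D E)⁻¹ • (E - D) + (dist D F)⁻¹ • (F - D)) := by
  have hc := dist_pos.2 hDE
  have hb := dist_pos.2 hDF
  have hσ : dist E F + dist F D + dist D E ≠ 0 := by positivity
  rw [triIncenter, dist_comm F D]
  match_scalars <;> field_simp; ring

/-- Right angle in the seven-piece refinement: with `P`, `P'` the intersections of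
the perpendicular to `DI` through the incenter `I` with the sides `DE`, `DF`, and
`Q` the reflection of `P` across line `EI`, the angle `∠ P Q P'` is right. -/
theorem seven_piece_right_angle (D E F : Plane)
    (hDEF : AffineIndependent ℝ ![D, E, F])
    (I : Plane) (hI : I = triIncenter D E F)
    (P : Plane) (hP : P ∈ segment ℝ D E)
    (hPperp : ⟪P - I, D - I⟫ = 0)
    (P' : Plane) (hP' : P' ∈ segment ℝ D F)
    (hP'perp : ⟪P' - I, D - I⟫ = 0)
    (Q : Plane) (hQ : Q = EuclideanGeometry.reflection (affineSpan ℝ {E, I}) P) :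
    ∠ P Q P' = π / 2 := by
  have hDE : D ≠ E := by simpa using hDEF.injective.ne (show (0 : Fin 3) ≠ 1 by decide)
  have hDF : D ≠ F := by simpa using hDEF.injective.ne (show (0 : Fin 3) ≠ 2 by decide)
  set u := (dist D E)⁻¹ • (E - D)
  set w := (dist D F)⁻¹ • (F - D)
  have hu : ‖u‖ = 1 := norm_inv_dist_smul_sub hDE
  have hw : ‖w‖ = 1 := norm_inv_dist_smul_sub hDF
  have huw : u + w ≠ 0 := inv_dist_smul_sub_add_ne_zero hDEF
  set r := dist D E * dist D F / (dist E F + dist F D + dist D E)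
  have hr : r ≠ 0 := by
    have := dist_pos.2 hDE; have := dist_pos.2 hDF; positivity
  have hID : I - D = r • (u + w) := hI ▸ triIncenter_sub_eq hDE hDF
  obtain ⟨x, hx⟩ := exists_sub_eq_smul_of_mem_segment hDE hP
  obtain ⟨y, hy⟩ := exists_sub_eq_smul_of_mem_segment hDF hP'
  have hPI : P - I = r • (u - w) := sub_eq_smul_sub_of_inner_eq_zero hu hw huw hr hID hx hPperp
  have hP'I : P' - I = r • (w - u) := sub_eq_smul_sub_of_inner_eq_zero hw hu
    (add_comm u w ▸ huw) hr (add_comm u w ▸ hID) hy hP'perp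
  have hmid : midpoint ℝ P P' = I := by
    rw [midpoint_eq_iff, AffineEquiv.pointReflection_apply, vsub_eq_sub, vadd_eq_add,
      ← sub_eq_zero]
    calc I - P + I - P' = -(P - I) - (P' - I) := by abel
      _ = 0 := by rw [hPI, hP'I]; module
  have : Nonempty (affineSpan ℝ ({E, I} : Set Plane)) := ⟨⟨I, mem_affineSpan ℝ (by simp)⟩⟩
  refine angle_eq_pi_div_two_of_midpoint_eq_of_dist_eq hmid ?_
  rw [hQ, dist_comm, dist_reflection_eq_of_mem _ (mem_affineSpan ℝ (by simp)), dist_comm]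
end
end
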